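/- arXiv:1810.12662 — 2 statements merged into one kernel-verified Lean document; each statement's English description precedes it below -/
import Mathlib

section
/- Let H = ℝ ⊕ ℝ ⊕ L²([0,1],ℝ) with elements x = (r,c,w) and the product Hilbert norm, and let P ⊆ H be a closed subspace such that there is a constant C > 0 with |r| ≤ C‖w‖_{L²} and |c| ≤ C‖w‖_{L²} for every (r,c,w) ∈ P. Let κ : [0,1] → ℝ be measurable with 0 < κ₀ ≤ κ(t) ≤ ℓ₀ for a.e. t, and let T : P → P be a compact self-adjoint operator. Define the quadratic form q(x) = ∫₀¹ κ(t) w(t)² dt + ⟨Tx,x⟩ on P. If q(x) > 0 for every nonzero x ∈ P, then there exists K > 0 such that q(x) ≥ K‖x‖² for every x ∈ P. -/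
open MeasureTheory

/-- The reference measure: Lebesgue measure restricted to `I = [0,1]`. -/
noncomputable def μ01 : Measure ℝ := volume.restrict (Set.Icc (0:ℝ) 1)

/-- The Hilbert space `H = ℝ ⊕ ℝ ⊕ L²([0,1],ℝ)` with the product Hilbert norm. -/
noncomputable abbrev H7 : Type := WithLp 2 (ℝ × WithLp 2 (ℝ × Lp ℝ 2 μ01))

/-- First component `r` of `x = (r,c,w) ∈ H7`. -/
noncomputable def comp_r (x : H7) : ℝ := (WithLp.equiv 2 _ x).1

/-- Second component `c` of `x = (r,c,w) ∈ H7`. -/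
noncomputable def comp_c (x : H7) : ℝ :=
  (WithLp.equiv 2 _ ((WithLp.equiv 2 _ x).2)).1

/-- Third component `w` of `x = (r,c,w) ∈ H7`. -/
noncomputable def comp_w (x : H7) : Lp ℝ 2 μ01 :=
  (WithLp.equiv 2 _ ((WithLp.equiv 2 _ x).2)).2

open Filter Topology

lemma comp_w_add (a b : H7) : comp_w (a + b) = comp_w a + comp_w b := rfl
lemma comp_w_sub (a b : H7) : comp_w (a - b) = comp_w a - comp_w b := rfl
lemma comp_w_smul (c : ℝ) (a : H7) : comp_w (c • a) = c • comp_w a := rfl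
lemma comp_w_zero : comp_w (0 : H7) = 0 := rfl

lemma H7_norm_sq (z : H7) :
    ‖z‖^2 = (comp_r z)^2 + (comp_c z)^2 + ‖comp_w z‖^2 := by
  rw [WithLp.prod_norm_sq_eq_of_L2 z, WithLp.prod_norm_sq_eq_of_L2 z.snd]
  simp [comp_r, comp_c, comp_w, Real.norm_eq_abs, sq_abs]
  ring

lemma integrable_sq7 (f : Lp ℝ 2 μ01) :
    Integrable (fun t => (f : ℝ → ℝ) t ^ 2) μ01 := by
  have h := L2.integrable_inner (𝕜 := ℝ) f f
  simpa [RCLike.inner_apply, pow_two] using h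

lemma int_sq_eq7 (f : Lp ℝ 2 μ01) :
    ∫ t, (f : ℝ → ℝ) t ^ 2 ∂μ01 = ‖f‖ ^ 2 := by
  rw [← real_inner_self_eq_norm_sq, L2.inner_def]
  simp [RCLike.inner_apply, pow_two]
section J
variable {κ : ℝ → ℝ} {κ₀ ℓ₀ : ℝ}

noncomputable def J7 (κ : ℝ → ℝ) (f : Lp ℝ 2 μ01) : ℝ :=
  ∫ t, κ t * (f : ℝ → ℝ) t ^ 2 ∂μ01

lemma J7_integrable (hκ : Measurable κ)
    (hb : ∀ᵐ t ∂μ01, κ₀ ≤ κ t ∧ κ t ≤ ℓ₀) (h0 : 0 < κ₀) (f : Lp ℝ 2 μ01) :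
    Integrable (fun t => κ t * (f : ℝ → ℝ) t ^ 2) μ01 := by
  refine ((integrable_sq7 f).const_mul ℓ₀).mono' ?_ ?_
  · exact (hκ.aestronglyMeasurable.mul
      (((Lp.aestronglyMeasurable f).mul (Lp.aestronglyMeasurable f)).congr
        (Filter.Eventually.of_forall fun t => (pow_two _).symm)))
  · filter_upwards [hb] with t ht
    have h1 : 0 ≤ κ t := le_trans h0.le ht.1
    rw [Real.norm_eq_abs, abs_mul, abs_of_nonneg h1, abs_of_nonneg (sq_nonneg _)]
    exact mul_le_mul_of_nonneg_right ht.2 (sq_nonneg _)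

lemma J7_lower (hκ : Measurable κ)
    (hb : ∀ᵐ t ∂μ01, κ₀ ≤ κ t ∧ κ t ≤ ℓ₀) (h0 : 0 < κ₀) (f : Lp ℝ 2 μ01) :
    κ₀ * ‖f‖ ^ 2 ≤ J7 κ f := by
  have h := integral_mono_ae ((integrable_sq7 f).const_mul κ₀)
    (J7_integrable hκ hb h0 f)
    (by filter_upwards [hb] with t ht
        exact mul_le_mul_of_nonneg_right ht.1 (sq_nonneg _))
  rwa [integral_const_mul, int_sq_eq7] at h

lemma J7_upper (hκ : Measurable κ)
    (hb : ∀ᵐ t ∂μ01, κ₀ ≤ κ t ∧ κ t ≤ ℓ₀) (h0 : 0 < κ₀) (f : Lp ℝ 2 μ01) :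
    J7 κ f ≤ ℓ₀ * ‖f‖ ^ 2 := by
  have h := integral_mono_ae (J7_integrable hκ hb h0 f)
    ((integrable_sq7 f).const_mul ℓ₀)
    (by filter_upwards [hb] with t ht
        exact mul_le_mul_of_nonneg_right ht.2 (sq_nonneg _))
  rwa [integral_const_mul, int_sq_eq7] at h

lemma J7_para (hκ : Measurable κ)
    (hb : ∀ᵐ t ∂μ01, κ₀ ≤ κ t ∧ κ t ≤ ℓ₀) (h0 : 0 < κ₀) (f g : Lp ℝ 2 μ01) :
    J7 κ (f + g) + J7 κ (f - g) = 2 * J7 κ f + 2 * J7 κ g := by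
  unfold J7
  rw [← integral_add (J7_integrable hκ hb h0 (f+g)) (J7_integrable hκ hb h0 (f-g))]
  have heq : (fun t => κ t * ((f + g : Lp ℝ 2 μ01) : ℝ → ℝ) t ^ 2
      + κ t * ((f - g : Lp ℝ 2 μ01) : ℝ → ℝ) t ^ 2)
      =ᵐ[μ01] fun t => 2 * (κ t * (f : ℝ → ℝ) t ^ 2) + 2 * (κ t * (g : ℝ → ℝ) t ^ 2) := by
    filter_upwards [Lp.coeFn_add f g, Lp.coeFn_sub f g] with t h1 h2
    rw [h1, h2]
    simp only [Pi.add_apply, Pi.sub_apply]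
    ring
  rw [integral_congr_ae heq,
    integral_add ((J7_integrable hκ hb h0 f).const_mul 2) ((J7_integrable hκ hb h0 g).const_mul 2),
    integral_const_mul, integral_const_mul]

lemma J7_smul (c : ℝ) (f : Lp ℝ 2 μ01) : J7 κ (c • f) = c ^ 2 * J7 κ f := by
  unfold J7
  rw [← integral_const_mul]
  refine integral_congr_ae ?_
  filter_upwards [Lp.coeFn_smul c f] with t h1
  rw [h1]
  simp only [Pi.smul_apply, smul_eq_mul]
  ring

lemma J7_zero : J7 κ (0 : Lp ℝ 2 μ01) = 0 := by
  unfold J7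
  rw [show (0:ℝ) = ∫ (_ : ℝ), (0:ℝ) ∂μ01 by simp]
  refine integral_congr_ae ?_
  filter_upwards [Lp.coeFn_zero ℝ 2 μ01] with t h1
  rw [h1]; simp

end J

section TQ
variable {E : Type*} [NormedAddCommGroup E] [InnerProductSpace ℝ E]

lemma tq_para7 (T : E →L[ℝ] E) (x y : E) :
    (inner ℝ (T (x + y)) (x + y) : ℝ) + (inner ℝ (T (x - y)) (x - y) : ℝ)
      = 2 * (inner ℝ (T x) x : ℝ) + 2 * (inner ℝ (T y) y : ℝ) := by
  simp only [map_add, map_sub, inner_add_left, inner_add_right, inner_sub_left, inner_sub_right]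
  ring

lemma tq_smul7 (T : E →L[ℝ] E) (c : ℝ) (x : E) :
    (inner ℝ (T (c • x)) (c • x) : ℝ) = c ^ 2 * (inner ℝ (T x) x : ℝ) := by
  rw [T.map_smul, real_inner_smul_left, real_inner_smul_right]
  ring

end TQ

theorem abstract_coercive {E : Type*} [NormedAddCommGroup E] [InnerProductSpace ℝ E]
    [CompleteSpace E] (T : E →L[ℝ] E) (hTcomp : IsCompactOperator T)
    (q : E → ℝ) (α β : ℝ) (hα : 0 < α)
    (hpar : ∀ x y : E, q (x + y) + q (x - y) = 2 * q x + 2 * q y)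
    (hscal : ∀ (c : ℝ) (x : E), q (c • x) = c ^ 2 * q x)
    (hlow : ∀ x : E, α * ‖x‖ ^ 2 ≤ q x - (inner ℝ (T x) x : ℝ))
    (hup : ∀ x : E, q x ≤ β * ‖x‖ ^ 2)
    (hqpos : ∀ x : E, x ≠ 0 → 0 < q x) :
    ∃ K : ℝ, 0 < K ∧ ∀ x : E, K * ‖x‖ ^ 2 ≤ q x := by
  by_contra hcon
  push_neg at hcon
  have hq0 : q 0 = 0 := by
    have h := hscal 0 0
    simpa using h
  have hqnn : ∀ x : E, 0 ≤ q x := fun x => by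
    rcases eq_or_ne x 0 with rfl | hx
    · exact hq0.ge
    · exact (hqpos x hx).le
  have hex : ∀ n : ℕ, ∃ y : E, ‖y‖ = 1 ∧ q y < 1 / (n + 1) := by
    intro n
    obtain ⟨x, hx⟩ := hcon (1 / (n + 1)) (by positivity)
    have hx0 : x ≠ 0 := by
      rintro rfl
      rw [hq0] at hx
      simp at hx
    have hxn : (0:ℝ) < ‖x‖ := norm_pos_iff.2 hx0
    refine ⟨‖x‖⁻¹ • x, ?_, ?_⟩
    · rw [norm_smul, norm_inv, norm_norm, inv_mul_cancel₀ hxn.ne']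
    · rw [hscal]
      calc (‖x‖⁻¹) ^ 2 * q x < (‖x‖⁻¹) ^ 2 * (1 / (n + 1) * ‖x‖ ^ 2) :=
            mul_lt_mul_of_pos_left hx (by positivity)
        _ = 1 / (n + 1) := by field_simp
  choose y hy1 hy2 using hex
  obtain ⟨Kc, hKc, hKmem⟩ := hTcomp
  obtain ⟨ε, hε, hball⟩ := Metric.mem_nhds_iff.1 hKmem
  have hmemK : ∀ n, T ((ε / 2) • y n) ∈ Kc := by
    intro n
    apply hball
    rw [Metric.mem_ball, dist_zero_right, norm_smul, hy1, mul_one, Real.norm_eq_abs,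
      abs_of_pos (half_pos hε)]
    exact half_lt_self hε
  obtain ⟨z, _, φ, hφmono, hφtend⟩ := hKc.isSeqCompact hmemK
  have hTy : Tendsto (fun n => T (y (φ n))) atTop (𝓝 ((2 / ε) • z)) := by
    have he : ∀ n, (2 / ε) • T ((ε / 2) • y (φ n)) = T (y (φ n)) := by
      intro n
      rw [T.map_smul, smul_smul, div_mul_div_comm,
        show (2 * ε) / (ε * 2) = 1 by rw [mul_comm]; exact div_self (by positivity), one_smul]
    exact (hφtend.const_smul (2 / ε)).congr he
  have hTyC : CauchySeq (fun n => T (y (φ n))) := hTy.cauchySeq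
  have hφle : ∀ n : ℕ, (n : ℝ) ≤ φ n := fun n => by exact_mod_cast hφmono.le_apply
  have hq_small : ∀ n, q (y (φ n)) < 1 / (n + 1) := by
    intro n
    refine (hy2 (φ n)).trans_le ?_
    apply one_div_le_one_div_of_le (by positivity)
    have := hφle n; linarith
  have hkey : ∀ m n : ℕ, α * ‖y (φ m) - y (φ n)‖ ^ 2
      ≤ 2 * q (y (φ m)) + 2 * q (y (φ n)) + 2 * ‖T (y (φ m)) - T (y (φ n))‖ := by
    intro m n
    have h1 := hlow (y (φ m) - y (φ n))
    have h2 : q (y (φ m) - y (φ n)) ≤ 2 * q (y (φ m)) + 2 * q (y (φ n)) := by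
      have hp := hpar (y (φ m)) (y (φ n))
      have hn := hqnn (y (φ m) + y (φ n))
      linarith
    have hb : ‖y (φ m) - y (φ n)‖ ≤ 2 := by
      have := norm_sub_le (y (φ m)) (y (φ n))
      rw [hy1, hy1] at this
      linarith
    have ha : |(inner ℝ (T (y (φ m) - y (φ n))) (y (φ m) - y (φ n)) : ℝ)|
        ≤ ‖T (y (φ m) - y (φ n))‖ * ‖y (φ m) - y (φ n)‖ := abs_real_inner_le_norm _ _
    have hc : T (y (φ m) - y (φ n)) = T (y (φ m)) - T (y (φ n)) := map_sub T _ _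
    have hcn : ‖T (y (φ m) - y (φ n))‖ = ‖T (y (φ m)) - T (y (φ n))‖ := by rw [hc]
    rw [hcn] at ha
    have h3 : -(inner ℝ (T (y (φ m) - y (φ n))) (y (φ m) - y (φ n)) : ℝ)
        ≤ 2 * ‖T (y (φ m)) - T (y (φ n))‖ := by
      have hd := neg_abs_le (inner ℝ (T (y (φ m) - y (φ n))) (y (φ m) - y (φ n)) : ℝ)
      nlinarith [ha, hd, hb, norm_nonneg (T (y (φ m)) - T (y (φ n))),
        norm_nonneg (y (φ m) - y (φ n))]
    linarith
  have hyC : CauchySeq (fun n => y (φ n)) := by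
    rw [Metric.cauchySeq_iff]
    intro δ hδ
    obtain ⟨N₁, hN₁⟩ := exists_nat_gt (6 / (α * δ ^ 2))
    obtain ⟨N₂, hN₂⟩ := Metric.cauchySeq_iff.1 hTyC (α * δ ^ 2 / 6) (by positivity)
    refine ⟨max N₁ N₂, fun m hm n hn => ?_⟩
    have hqm : 2 * q (y (φ m)) < α * δ ^ 2 / 3 := by
      have h6 : 6 / (α * δ ^ 2) < (m : ℝ) + 1 := by
        have : (N₁ : ℝ) ≤ m := by exact_mod_cast le_trans (le_max_left _ _) hm
        linarith
      have h6' : 6 < ((m : ℝ) + 1) * (α * δ ^ 2) := (div_lt_iff₀ (by positivity)).1 h6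
      have hinv : (1 : ℝ) / ((m : ℝ) + 1) * ((m : ℝ) + 1) = 1 := by
        field_simp
      nlinarith [hq_small m, hqnn (y (φ m))]
    have hqn : 2 * q (y (φ n)) < α * δ ^ 2 / 3 := by
      have h6 : 6 / (α * δ ^ 2) < (n : ℝ) + 1 := by
        have : (N₁ : ℝ) ≤ n := by exact_mod_cast le_trans (le_max_left _ _) hn
        linarith
      have h6' : 6 < ((n : ℝ) + 1) * (α * δ ^ 2) := (div_lt_iff₀ (by positivity)).1 h6
      have hinv : (1 : ℝ) / ((n : ℝ) + 1) * ((n : ℝ) + 1) = 1 := by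
        field_simp
      nlinarith [hq_small n, hqnn (y (φ n))]
    have hqT : 2 * ‖T (y (φ m)) - T (y (φ n))‖ < α * δ ^ 2 / 3 := by
      have := hN₂ m (le_trans (le_max_right _ _) hm) n (le_trans (le_max_right _ _) hn)
      rw [dist_eq_norm] at this
      linarith
    have hk := hkey m n
    have hd2 : ‖y (φ m) - y (φ n)‖ ^ 2 < δ ^ 2 := by nlinarith
    have hd : ‖y (φ m) - y (φ n)‖ < δ := by
      nlinarith [norm_nonneg (y (φ m) - y (φ n))]
    rwa [dist_eq_norm]
  obtain ⟨w, hw⟩ := cauchySeq_tendsto_of_complete hyC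
  have hw1 : ‖w‖ = 1 := by
    have h1 : Tendsto (fun n => ‖y (φ n)‖) atTop (𝓝 ‖w‖) := hw.norm
    have h2 : (fun n => ‖y (φ n)‖) = fun _ => (1 : ℝ) := funext fun n => hy1 _
    rw [h2] at h1
    exact (tendsto_nhds_unique h1 tendsto_const_nhds)
  have hw0 : w ≠ 0 := fun h => by simp [h] at hw1
  have hfin : ∀ n, q w ≤ 2 * q (y (φ n)) + 2 * (β * ‖w - y (φ n)‖ ^ 2) := by
    intro n
    have hp := hpar (y (φ n)) (w - y (φ n))
    have he : y (φ n) + (w - y (φ n)) = w := by abel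
    rw [he] at hp
    have h1 := hqnn (y (φ n) - (w - y (φ n)))
    have h2 := hup (w - y (φ n))
    nlinarith [sq_nonneg ‖w - y (φ n)‖]
  have hlim : Tendsto (fun n => 2 * q (y (φ n)) + 2 * (β * ‖w - y (φ n)‖ ^ 2))
      atTop (𝓝 0) := by
    have l1 : Tendsto (fun n => q (y (φ n))) atTop (𝓝 0) := by
      apply squeeze_zero (fun n => hqnn _) (fun n => (hq_small n).le)
      exact tendsto_one_div_add_atTop_nhds_zero_nat
    have l2 : Tendsto (fun n => ‖w - y (φ n)‖) atTop (𝓝 0) := by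
      have h3 : Tendsto (fun n => w - y (φ n)) atTop (𝓝 (w - w)) :=
        tendsto_const_nhds.sub hw
      rw [sub_self] at h3
      simpa using h3.norm
    have l3 : Tendsto (fun n => ‖w - y (φ n)‖ ^ 2) atTop (𝓝 0) := by
      have := l2.pow 2
      simpa using this
    have := (l1.const_mul 2).add ((l3.const_mul β).const_mul 2)
    simpa using this
  have hle : q w ≤ 0 := ge_of_tendsto' hlim hfin
  exact absurd (hqpos w hw0) (not_lt.2 hle)

set_option maxHeartbeats 1000000


/-- coercivity of the quadratic form
`q(x) = ∫₀¹ κ(t) w(t)² dt + ⟨Tx,x⟩` on a closed subspace `P` of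
`ℝ ⊕ ℝ ⊕ L²` on which `|r|, |c| ≤ C‖w‖`, with `κ₀ ≤ κ ≤ ℓ₀` a.e. (κ₀ > 0)
and `T` compact self-adjoint: if `q > 0` on `P \ {0}`, then `q(x) ≥ K‖x‖²`
on `P` for some `K > 0`. -/
theorem stmt_7 (P : Submodule ℝ H7) (hPclosed : IsClosed (P : Set H7))
    (C : ℝ) (hC : 0 < C)
    (hPbound : ∀ x ∈ P, |comp_r x| ≤ C * ‖comp_w x‖ ∧ |comp_c x| ≤ C * ‖comp_w x‖)
    (κ : ℝ → ℝ) (hκmeas : Measurable κ) (κ₀ ℓ₀ : ℝ) (hκ₀ : 0 < κ₀)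
    (hκbound : ∀ᵐ t ∂μ01, κ₀ ≤ κ t ∧ κ t ≤ ℓ₀)
    (T : ↥P →L[ℝ] ↥P) (hTcomp : IsCompactOperator T)
    (hTsa : ∀ x y : ↥P, (inner ℝ ((T x : H7)) ((y : H7)) : ℝ) =
      inner ℝ ((x : H7)) ((T y : H7)))
    (q : ↥P → ℝ)
    (hq : ∀ x : ↥P,
      q x = (∫ t, κ t * (comp_w (x : H7) : ℝ → ℝ) t ^ 2 ∂μ01) +
        (inner ℝ ((T x : H7)) ((x : H7)) : ℝ))
    (hqpos : ∀ x : ↥P, x ≠ 0 → 0 < q x) :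
    ∃ K : ℝ, 0 < K ∧ ∀ x : ↥P, K * ‖(x : H7)‖ ^ 2 ≤ q x := by
  classical
  haveI : CompleteSpace ↥P := hPclosed.completeSpace_coe
  have hinner : ∀ u v : ↥P, (inner ℝ ((u : H7)) ((v : H7)) : ℝ) = (inner ℝ u v : ℝ) :=
    fun u v => rfl
  have hncoe : ∀ u : ↥P, ‖(u : H7)‖ = ‖u‖ := fun u => rfl
  -- ℓ₀ is positive
  have hμ : (μ01 : Measure ℝ) ≠ 0 := by
    intro h
    have h2 : μ01 (Set.Icc (0:ℝ) 1) = 1 := by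
      simp [μ01, Real.volume_Icc]
    rw [h] at h2; simp at h2
  haveI : (ae μ01).NeBot := ae_neBot.2 hμ
  obtain ⟨t₀, ht₀⟩ := hκbound.exists
  have hℓ₀ : 0 < ℓ₀ := lt_of_lt_of_le hκ₀ (ht₀.1.trans ht₀.2)
  have hq' : ∀ x : ↥P, q x = J7 κ (comp_w (x : H7)) + (inner ℝ (T x) x : ℝ) := by
    intro x
    rw [hq x, hinner (T x) x]
    rfl
  -- norm comparison on P
  have hnorm : ∀ x : ↥P, ‖(x : H7)‖ ^ 2 ≤ (1 + 2 * C ^ 2) * ‖comp_w (x : H7)‖ ^ 2 := by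
    intro x
    obtain ⟨h1, h2⟩ := hPbound (x : H7) x.2
    have e := H7_norm_sq (x : H7)
    have hr : (comp_r (x : H7)) ^ 2 ≤ (C * ‖comp_w (x : H7)‖) ^ 2 := by
      rw [← sq_abs]
      exact pow_le_pow_left₀ (abs_nonneg _) h1 2
    have hc : (comp_c (x : H7)) ^ 2 ≤ (C * ‖comp_w (x : H7)‖) ^ 2 := by
      rw [← sq_abs]
      exact pow_le_pow_left₀ (abs_nonneg _) h2 2
    nlinarith [sq_nonneg ‖comp_w (x : H7)‖]
  set α : ℝ := κ₀ / (1 + 2 * C ^ 2) with hαdef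
  have h1C : (0:ℝ) < 1 + 2 * C ^ 2 := by positivity
  have hαpos : 0 < α := div_pos hκ₀ h1C
  have hblow : ∀ x : ↥P, α * ‖(x : H7)‖ ^ 2 ≤ J7 κ (comp_w (x : H7)) := by
    intro x
    have h1 : α * ‖(x : H7)‖ ^ 2 ≤ α * ((1 + 2 * C ^ 2) * ‖comp_w (x : H7)‖ ^ 2) :=
      mul_le_mul_of_nonneg_left (hnorm x) hαpos.le
    have h2 : α * ((1 + 2 * C ^ 2) * ‖comp_w (x : H7)‖ ^ 2)
        = κ₀ * ‖comp_w (x : H7)‖ ^ 2 := by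
      rw [hαdef, ← mul_assoc, div_mul_cancel₀ _ h1C.ne']
    exact h1.trans_eq h2 |>.trans (J7_lower hκmeas hκbound hκ₀ _)
  have hcoe_add : ∀ x y : ↥P, ((x + y : ↥P) : H7) = (x : H7) + (y : H7) := fun x y => rfl
  have hcoe_sub : ∀ x y : ↥P, ((x - y : ↥P) : H7) = (x : H7) - (y : H7) := fun x y => rfl
  -- hypotheses of the abstract lemma
  have hpar : ∀ x y : ↥P, q (x + y) + q (x - y) = 2 * q x + 2 * q y := by
    intro x y
    rw [hq' (x + y), hq' (x - y), hq' x, hq' y, hcoe_add, hcoe_sub,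
      comp_w_add, comp_w_sub]
    have hJ := J7_para hκmeas hκbound hκ₀ (comp_w (x : H7)) (comp_w (y : H7))
    have hT := tq_para7 T x y
    linarith
  have hscal : ∀ (c : ℝ) (x : ↥P), q (c • x) = c ^ 2 * q x := by
    intro c x
    have hcoe_smul : ((c • x : ↥P) : H7) = c • (x : H7) := rfl
    rw [hq' (c • x), hq' x, hcoe_smul, comp_w_smul, J7_smul, tq_smul7 T c x]
    ring
  have hlow : ∀ x : ↥P, α * ‖x‖ ^ 2 ≤ q x - (inner ℝ (T x) x : ℝ) := by
    intro x
    rw [hq' x]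
    have := hblow x
    rw [hncoe] at this
    linarith
  have hup : ∀ x : ↥P, q x ≤ (ℓ₀ + ‖T‖) * ‖x‖ ^ 2 := by
    intro x
    rw [hq' x]
    have h1 : J7 κ (comp_w (x : H7)) ≤ ℓ₀ * ‖comp_w (x : H7)‖ ^ 2 :=
      J7_upper hκmeas hκbound hκ₀ _
    have hwle : ‖comp_w (x : H7)‖ ^ 2 ≤ ‖x‖ ^ 2 := by
      have e := H7_norm_sq (x : H7)
      rw [hncoe] at e
      nlinarith [sq_nonneg (comp_r (x : H7)), sq_nonneg (comp_c (x : H7))]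
    have h2 : (inner ℝ (T x) x : ℝ) ≤ ‖T‖ * ‖x‖ ^ 2 := by
      have ha : (inner ℝ (T x) x : ℝ) ≤ ‖T x‖ * ‖x‖ := real_inner_le_norm _ _
      have hTx : ‖T x‖ ≤ ‖T‖ * ‖x‖ := T.le_opNorm x
      nlinarith [norm_nonneg x, norm_nonneg (T x)]
    nlinarith [sq_nonneg ‖x‖]
  obtain ⟨K, hK, hKle⟩ := abstract_coercive T hTcomp q α (ℓ₀ + ‖T‖) hαpos
    hpar hscal hlow hup hqpos
  exact ⟨K, hK, fun x => by rw [hncoe]; exact hKle x⟩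
end

section
/- Let s ∈ ℝ with cos s ≠ 1. Then there exists ℓ ∈ ℝ \ {0} such that ℓ − ℓ·cos s + 2·sin s = 0 and 2 + ℓ·s − 2·cos s − ℓ·sin s = 0, if and only if s·sin s + 2(cos s − 1) = 0. -/
/-- for `s` with `cos s ≠ 1`, there is a nonzero `ℓ` with
`ℓ − ℓ cos s + 2 sin s = 0` and `2 + ℓs − 2 cos s − ℓ sin s = 0` if and only if
`s sin s + 2(cos s − 1) = 0`. -/
theorem stmt_14 (s : ℝ) (h : Real.cos s ≠ 1) :
    (∃ ℓ : ℝ, ℓ ≠ 0 ∧ ℓ - ℓ * Real.cos s + 2 * Real.sin s = 0 ∧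
        2 + ℓ * s - 2 * Real.cos s - ℓ * Real.sin s = 0) ↔
      s * Real.sin s + 2 * (Real.cos s - 1) = 0 := by
  have pyth := Real.sin_sq_add_cos_sq s
  have hc : 1 - Real.cos s ≠ 0 := fun hh => h (by linarith)
  constructor
  · rintro ⟨ℓ, hℓ, h1, h2⟩
    -- ℓ (1 - cos s) = -2 sin s
    have hℓval : ℓ * (1 - Real.cos s) = -2 * Real.sin s := by ring_nf; linarith [h1]
    have key : (2 * (1 - Real.cos s) + ℓ * (s - Real.sin s)) * (1 - Real.cos s) = 0 := by
      have : 2 * (1 - Real.cos s) + ℓ * (s - Real.sin s) = 0 := by linarith [h2]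
      rw [this]; ring
    have expand : 2 * (1 - Real.cos s)^2 + (-2 * Real.sin s) * (s - Real.sin s) = 0 := by
      linear_combination key - (s - Real.sin s) * hℓval
    nlinarith [expand, pyth]
  · intro hz
    have hs : Real.sin s ≠ 0 := by
      intro hs0
      have hfac : (Real.cos s - 1) * (Real.cos s + 1) = 0 := by nlinarith [pyth]
      rcases mul_eq_zero.mp hfac with h1 | h1
      · exact h (by linarith)
      · rw [hs0, show Real.cos s = -1 by linarith] at hz; norm_num at hz
    refine ⟨-2 * Real.sin s / (1 - Real.cos s), ?_, ?_, ?_⟩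
    · exact div_ne_zero (by simpa using hs) hc
    · field_simp; ring
    · field_simp
      nlinarith [hz, pyth]
end
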